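/- Let f(x) = x² − x − 3 and, for n ≥ 3, let Bₙ(x,y) = ∏_{θ ∈ f^{−(n−3)}(−2)} Ψ_θ(x,y). Then for every n ≥ 3 and all (x,y) ∈ ℝ² with L(x,y)·K(x,y) ≠ 0, one has (L(x,y)·K(x,y))^{2^{n−3}} · Bₙ(F(x,y)) = A₁(x,y)^{2^{n−3}} · B_{n+1}(x,y). -/
import Mathlib

open Classical

/-- The quadratic polynomial `f(x) = x² - x - 3`. -/
noncomputable def hanoiF (x : ℝ) : ℝ := x ^ 2 - x - 3

/-- `Ψ_θ(x,y) = x² - 1 - xy - 2y² - θy`. -/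
noncomputable def hanoiPsiTheta (θ x y : ℝ) : ℝ := x ^ 2 - 1 - x * y - 2 * y ^ 2 - θ * y

/-- The two-dimensional rational map `F(x,y) = (x', y')`. -/
noncomputable def hanoiMap (p : ℝ × ℝ) : ℝ × ℝ :=
  (p.1 + 2 * p.2 ^ 2 * (-p.1 ^ 2 + p.1 + p.2 ^ 2) /
      ((p.1 - 1 - p.2) * (p.1 ^ 2 - 1 + p.2 - p.2 ^ 2)),
   p.2 ^ 2 * (p.1 - 1 + p.2) /
      ((p.1 - 1 - p.2) * (p.1 ^ 2 - 1 + p.2 - p.2 ^ 2)))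

/-- `L(x,y) = x - 1 - y`. -/
noncomputable def hanoiL (x y : ℝ) : ℝ := x - 1 - y

/-- `K(x,y) = x² - 1 + y - y²`. -/
noncomputable def hanoiK (x y : ℝ) : ℝ := x ^ 2 - 1 + y - y ^ 2

/-- `A₁(x,y) = x - 1 + y`. -/
noncomputable def hanoiA1 (x y : ℝ) : ℝ := x - 1 + y

/-- `B₂(x,y) = x + 1 + y` and, for `n ≥ 3`,
`Bₙ(x,y) = ∏_{θ ∈ f^{-(n-3)}(-2)} Ψ_θ(x,y)` (a finite product, since `f^{-(n-3)}(-2)`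
is a finite set of real numbers). -/
noncomputable def hanoiB : ℕ → ℝ → ℝ → ℝ
  | 0, _, _ => 1
  | 1, _, _ => 1
  | 2, x, y => x + 1 + y
  | (n + 3), x, y => ∏ᶠ θ ∈ {t : ℝ | hanoiF^[n] t = -2}, hanoiPsiTheta θ x y

/- ### Auxiliary development -/

/-- The larger root of `f(s) = θ`. -/
noncomputable def hanoiRp (θ : ℝ) : ℝ := (1 + Real.sqrt (13 + 4 * θ)) / 2
/-- The smaller root of `f(s) = θ`. -/
noncomputable def hanoiRm (θ : ℝ) : ℝ := (1 - Real.sqrt (13 + 4 * θ)) / 2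

lemma hanoi_sqrt_sq {θ : ℝ} (hθ : -3 ≤ θ) :
    Real.sqrt (13 + 4 * θ) * Real.sqrt (13 + 4 * θ) = 13 + 4 * θ :=
  Real.mul_self_sqrt (by linarith)

lemma hanoi_sqrt_ge_one {θ : ℝ} (hθ : -3 ≤ θ) : 1 ≤ Real.sqrt (13 + 4 * θ) := by
  nlinarith [hanoi_sqrt_sq hθ, Real.sqrt_nonneg (13 + 4 * θ)]

lemma hanoiRp_ne_Rm {θ : ℝ} (hθ : -3 ≤ θ) : hanoiRp θ ≠ hanoiRm θ := by
  have := hanoi_sqrt_ge_one hθ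
  unfold hanoiRp hanoiRm
  intro h; nlinarith

lemma hanoi_root_key {θ : ℝ} (hθ : -3 ≤ θ) (s : ℝ) :
    (s - hanoiRp θ) * (s - hanoiRm θ) = hanoiF s - θ := by
  have hsq := hanoi_sqrt_sq hθ
  unfold hanoiRp hanoiRm hanoiF
  linear_combination (-(1:ℝ)/4) * hsq

lemma hanoi_root_iff {θ : ℝ} (hθ : -3 ≤ θ) (s : ℝ) :
    hanoiF s = θ ↔ s = hanoiRp θ ∨ s = hanoiRm θ := by
  constructor
  · intro h
    have h0 : (s - hanoiRp θ) * (s - hanoiRm θ) = 0 := by rw [hanoi_root_key hθ, h]; ring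
    rcases mul_eq_zero.1 h0 with h1 | h1
    · exact Or.inl (by linarith [sub_eq_zero.1 h1])
    · exact Or.inr (by linarith [sub_eq_zero.1 h1])
  · rintro (rfl | rfl)
    · have := hanoi_root_key hθ (hanoiRp θ); simp at this; linarith
    · have := hanoi_root_key hθ (hanoiRm θ); simp at this; linarith

lemma hanoi_bound : ∀ (k : ℕ) (t : ℝ), hanoiF^[k] t = -2 → -3 ≤ t ∧ t ≤ 3 := by
  intro k
  induction k with
  | zero => intro t h; simp at h; constructor <;> simp [h] <;> norm_num
  | succ k ih =>
    intro t h
    rw [Function.iterate_succ_apply] at h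
    obtain ⟨h1, h2⟩ := ih (hanoiF t) h
    unfold hanoiF at h1 h2
    constructor <;> nlinarith

/-- The finite preimage sets `f^{-k}(-2)`. -/
noncomputable def hanoiT : ℕ → Finset ℝ
  | 0 => {-2}
  | (k + 1) => (hanoiT k).biUnion fun θ => ({hanoiRp θ, hanoiRm θ} : Finset ℝ)

lemma hanoiT_mem : ∀ (k : ℕ) (t : ℝ), t ∈ hanoiT k ↔ hanoiF^[k] t = -2 := by
  intro k
  induction k with
  | zero => intro t; simp [hanoiT]
  | succ k ih =>
    intro t
    simp only [hanoiT, Finset.mem_biUnion, Finset.mem_insert, Finset.mem_singleton,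
      Function.iterate_succ_apply]
    constructor
    · rintro ⟨θ, hθT, hcase⟩
      have hθ2 : hanoiF^[k] θ = -2 := (ih θ).1 hθT
      have hθb : -3 ≤ θ := (hanoi_bound k θ hθ2).1
      have : hanoiF t = θ := (hanoi_root_iff hθb t).2 hcase
      rw [this]; exact hθ2
    · intro h
      exact ⟨hanoiF t, (ih _).2 h,
        (hanoi_root_iff (hanoi_bound k _ h).1 t).1 rfl⟩

lemma hanoiT_lb {k : ℕ} {θ : ℝ} (h : θ ∈ hanoiT k) : -3 ≤ θ :=
  (hanoi_bound k θ ((hanoiT_mem k θ).1 h)).1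

lemma hanoiT_disj (k : ℕ) :
    ∀ θ₁ ∈ hanoiT k, ∀ θ₂ ∈ hanoiT k, θ₁ ≠ θ₂ →
      Disjoint ({hanoiRp θ₁, hanoiRm θ₁} : Finset ℝ) {hanoiRp θ₂, hanoiRm θ₂} := by
  intro θ₁ h1 θ₂ h2 hne
  rw [Finset.disjoint_left]
  intro s hs1 hs2
  simp only [Finset.mem_insert, Finset.mem_singleton] at hs1 hs2
  have e1 : hanoiF s = θ₁ := (hanoi_root_iff (hanoiT_lb h1) s).2 hs1
  have e2 : hanoiF s = θ₂ := (hanoi_root_iff (hanoiT_lb h2) s).2 hs2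
  exact hne (e1 ▸ e2)

lemma hanoiT_card : ∀ k : ℕ, (hanoiT k).card = 2 ^ k := by
  intro k
  induction k with
  | zero => simp [hanoiT]
  | succ k ih =>
    rw [show hanoiT (k+1) = (hanoiT k).biUnion
        (fun θ => ({hanoiRp θ, hanoiRm θ} : Finset ℝ)) from rfl,
      Finset.card_biUnion (hanoiT_disj k)]
    have : ∀ θ ∈ hanoiT k, ({hanoiRp θ, hanoiRm θ} : Finset ℝ).card = 2 := by
      intro θ hθ
      rw [Finset.card_insert_of_notMem (by simp [hanoiRp_ne_Rm (hanoiT_lb hθ)]),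
        Finset.card_singleton]
    rw [Finset.sum_congr rfl this, Finset.sum_const, ih]
    ring

/-- The quadratic product identity. -/
lemma hanoi_psi_prod {θ : ℝ} (hθ : -3 ≤ θ) (x y : ℝ) :
    hanoiPsiTheta (hanoiRp θ) x y * hanoiPsiTheta (hanoiRm θ) x y =
      (x^2 - 1 - x*y - 2*y^2)^2 - (x^2 - 1 - x*y - 2*y^2) * y - (3 + θ) * y^2 := by
  have hsq := hanoi_sqrt_sq hθ
  unfold hanoiPsiTheta hanoiRp hanoiRm
  linear_combination (-(y^2)/4) * hsq

/-- The key per-factor identity. -/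
lemma hanoi_key {θ : ℝ} (hθ : -3 ≤ θ) {x y : ℝ}
    (hL : x - 1 - y ≠ 0) (hK : x ^ 2 - 1 + y - y ^ 2 ≠ 0) :
    (hanoiL x y * hanoiK x y) *
        hanoiPsiTheta θ (hanoiMap (x, y)).1 (hanoiMap (x, y)).2 =
      hanoiA1 x y *
        (hanoiPsiTheta (hanoiRp θ) x y * hanoiPsiTheta (hanoiRm θ) x y) := by
  rw [hanoi_psi_prod hθ]
  unfold hanoiL hanoiK hanoiA1 hanoiPsiTheta hanoiMap
  simp only
  field_simp
  ring

/-- For `n ≥ 3`: `(L·K)^{2^{n-3}} · Bₙ(F(x,y)) = A₁^{2^{n-3}} · B_{n+1}(x,y)`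
wherever `L·K ≠ 0`. -/
theorem B_pullback (n : ℕ) (hn : 3 ≤ n) (x y : ℝ)
    (hLK : hanoiL x y * hanoiK x y ≠ 0) :
    (hanoiL x y * hanoiK x y) ^ 2 ^ (n - 3) *
        hanoiB n (hanoiMap (x, y)).1 (hanoiMap (x, y)).2 =
      hanoiA1 x y ^ 2 ^ (n - 3) * hanoiB (n + 1) x y := by
  obtain ⟨k, rfl⟩ : ∃ k, n = k + 3 := ⟨n - 3, by omega⟩
  have hL : x - 1 - y ≠ 0 := fun h => hLK (by unfold hanoiL; rw [h]; ring)
  have hK : x ^ 2 - 1 + y - y ^ 2 ≠ 0 := fun h => hLK (by unfold hanoiK; rw [h]; ring)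
  have hsets : ∀ m : ℕ, {t : ℝ | hanoiF^[m] t = -2} = ↑(hanoiT m) := by
    intro m; ext t; simp [hanoiT_mem]
  have hB : ∀ (m : ℕ) (a b : ℝ), hanoiB (m + 3) a b = ∏ θ ∈ hanoiT m, hanoiPsiTheta θ a b := by
    intro m a b
    show (∏ᶠ θ ∈ {t : ℝ | hanoiF^[m] t = -2}, hanoiPsiTheta θ a b) = _
    rw [hsets m, finprod_mem_coe_finset]
  have h3 : k + 3 - 3 = k := by omega
  have h4 : k + 3 + 1 = (k + 1) + 3 := by omega
  rw [h3, hB k, h4, hB (k+1)]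
  rw [show hanoiT (k+1) = (hanoiT k).biUnion
      (fun θ => ({hanoiRp θ, hanoiRm θ} : Finset ℝ)) from rfl,
    Finset.prod_biUnion (fun a ha b hb hab => hanoiT_disj k a ha b hb hab)]
  rw [← hanoiT_card k, ← Finset.prod_const (hanoiL x y * hanoiK x y),
    ← Finset.prod_const (hanoiA1 x y), ← Finset.prod_mul_distrib,
    ← Finset.prod_mul_distrib]
  refine Finset.prod_congr rfl fun θ hθ => ?_
  rw [Finset.prod_pair (hanoiRp_ne_Rm (hanoiT_lb hθ))]
  exact hanoi_key (hanoiT_lb hθ) hL hK
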